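/- arXiv:2011.05178 — 5 statements merged into one kernel-verified Lean document; each statement's English description precedes it below -/
import Mathlib

section
/- For every complex number z with Re(z) ≤ 0 and |z| ≤ 1, one has |r(z) - exp(z)| ≤ (5/12)|z|³, where r(z) = (1+z/2)/(1-z/2). -/
/-!
Both `r z` and `exp z` agree with the cubic Taylor polynomial `T z = 1 + z + z²/2 + z³/6`
up to a cubic error. Exactly, `r z - T z = z³ (1 + z) / (12 (1 - z/2))`, and on the left
half-plane `‖1 - z/2‖ ≥ Re (1 - z/2) ≥ 1`, so `‖r z - T z‖ ≤ ‖z‖³/6` on the unit disc; the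
Taylor remainder of `exp` gives `‖exp z - T z‖ ≤ (5/96) ‖z‖⁴`. Since `1/6 + 5/96 < 5/12`,
the triangle inequality finishes.
-/

noncomputable def r (z : ℂ) : ℂ := (1 + z / 2) / (1 - z / 2)

namespace CrankNicolson

noncomputable def expTaylor3 (z : ℂ) : ℂ := 1 + z + z ^ 2 / 2 + z ^ 3 / 6

lemma one_le_norm_one_sub_half {z : ℂ} (hre : z.re ≤ 0) : 1 ≤ ‖1 - z / 2‖ := by
  have hre' : 1 ≤ (1 - z / 2).re := by
    simp only [Complex.sub_re, Complex.one_re, Complex.div_ofNat_re]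
    linarith
  exact hre'.trans (Complex.re_le_norm _)

lemma r_sub_expTaylor3 {z : ℂ} (hz : 1 - z / 2 ≠ 0) :
    r z - expTaylor3 z = z ^ 3 * (1 + z) / (12 * (1 - z / 2)) := by
  have h2 : 2 - z ≠ 0 := fun h => hz (by linear_combination h / 2)
  rw [r, expTaylor3]
  field_simp
  ring

lemma norm_r_sub_expTaylor3_le {z : ℂ} (hre : z.re ≤ 0) (habs : ‖z‖ ≤ 1) :
    ‖r z - expTaylor3 z‖ ≤ ‖z‖ ^ 3 / 6 := by
  have hden := one_le_norm_one_sub_half hre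
  have hden0 : 1 - z / 2 ≠ 0 := norm_pos_iff.mp (by linarith)
  have hnum : ‖1 + z‖ ≤ 2 := (norm_add_le _ _).trans (by rw [norm_one]; linarith)
  rw [r_sub_expTaylor3 hden0, norm_div, norm_mul, norm_mul, norm_pow, Complex.norm_ofNat]
  calc ‖z‖ ^ 3 * ‖1 + z‖ / (12 * ‖1 - z / 2‖) ≤ ‖z‖ ^ 3 * 2 / (12 * 1) := by gcongr
    _ = ‖z‖ ^ 3 / 6 := by ring

lemma norm_exp_sub_expTaylor3_le {z : ℂ} (habs : ‖z‖ ≤ 1) :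
    ‖Complex.exp z - expTaylor3 z‖ ≤ 5 / 96 * ‖z‖ ^ 4 := by
  have h := Complex.exp_bound habs (n := 4) (by norm_num)
  simp only [Finset.sum_range_succ, Finset.sum_range_zero] at h
  norm_num [Nat.factorial] at h
  rwa [expTaylor3, mul_comm]

end CrankNicolson

open CrankNicolson in
theorem cn_local_error_bound (z : ℂ) (hre : z.re ≤ 0) (habs : ‖z‖ ≤ 1) :
    ‖r z - Complex.exp z‖ ≤ (5 / 12) * (‖z‖) ^ 3 := by
  have hr := norm_r_sub_expTaylor3_le hre habs
  have hexp := norm_exp_sub_expTaylor3_le habs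
  have hz4 : ‖z‖ ^ 4 ≤ ‖z‖ ^ 3 := pow_le_pow_of_le_one (norm_nonneg z) habs (by norm_num)
  calc ‖r z - Complex.exp z‖
      = ‖(r z - expTaylor3 z) - (Complex.exp z - expTaylor3 z)‖ := by
        rw [sub_sub_sub_cancel_right]
    _ ≤ ‖r z - expTaylor3 z‖ + ‖Complex.exp z - expTaylor3 z‖ := norm_sub_le _ _
    _ ≤ (5 / 12) * ‖z‖ ^ 3 := by nlinarith [pow_nonneg (norm_nonneg z) 3]
end

section
/- For every α ∈ (0, π/2) and every ρ with 0 ≤ ρ ≤ 1, one has |r(-ρ e^{iα})|² ≤ ((1 - (2ρ/5)cos α)/(1 + (2ρ/5)cos α))², where r(z) = (1+z/2)/(1-z/2). Equivalently, (1 + ρ²/4 - ρ cos α)/(1 + ρ²/4 + ρ cos α) ≤ ((1 - (2ρ/5)cos α)/(1 + (2ρ/5)cos α))². -/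
lemma Complex.norm_one_add_mul_exp_mul_I_sq (t α : ℝ) :
    ‖1 + (t : ℂ) * Complex.exp ((α : ℂ) * Complex.I)‖ ^ 2 = 1 + t ^ 2 + 2 * t * Real.cos α := by
  have hpart : 1 + (t : ℂ) * Complex.exp ((α : ℂ) * Complex.I) =
      ((1 + t * Real.cos α : ℝ) : ℂ) + ((t * Real.sin α : ℝ) : ℂ) * Complex.I := by
    rw [Complex.exp_mul_I, ← Complex.ofReal_cos, ← Complex.ofReal_sin]
    push_cast
    ring
  rw [← Complex.normSq_eq_norm_sq, hpart, Complex.normSq_add_mul_I]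
  linear_combination t ^ 2 * Real.sin_sq_add_cos_sq α

lemma norm_r_neg_mul_exp_mul_I_sq (ρ α : ℝ) :
    ‖r (-(ρ : ℂ) * Complex.exp ((α : ℂ) * Complex.I))‖ ^ 2 =
      (1 + ρ ^ 2 / 4 - ρ * Real.cos α) / (1 + ρ ^ 2 / 4 + ρ * Real.cos α) := by
  set e := Complex.exp ((α : ℂ) * Complex.I)
  have hnum : 1 + -(ρ : ℂ) * e / 2 = 1 + ((-ρ / 2 : ℝ) : ℂ) * e := by push_cast; ring
  have hden : 1 - -(ρ : ℂ) * e / 2 = 1 + ((ρ / 2 : ℝ) : ℂ) * e := by push_cast; ring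
  rw [r, norm_div, div_pow, hnum, hden, Complex.norm_one_add_mul_exp_mul_I_sq,
    Complex.norm_one_add_mul_exp_mul_I_sq]
  congr 1 <;> ring

lemma div_le_sq_div_of_le_one {ρ c : ℝ} (hρ0 : 0 ≤ ρ) (hρ1 : ρ ≤ 1) (hc : 0 ≤ c) :
    (1 + ρ ^ 2 / 4 - ρ * c) / (1 + ρ ^ 2 / 4 + ρ * c) ≤
      ((1 - (2 * ρ / 5) * c) / (1 + (2 * ρ / 5) * c)) ^ 2 := by
  have hden : 0 < 1 + ρ ^ 2 / 4 + ρ * c := by positivity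
  have hden' : 0 < (1 + (2 * ρ / 5) * c) ^ 2 := by positivity
  rw [div_pow, div_le_div_iff₀ hden hden']
  have hgap : (1 - (2 * ρ / 5) * c) ^ 2 * (1 + ρ ^ 2 / 4 + ρ * c) -
      (1 + ρ ^ 2 / 4 - ρ * c) * (1 + (2 * ρ / 5) * c) ^ 2 =
      2 * ρ * c / 25 * (5 * (1 - ρ ^ 2) + 4 * (ρ * c) ^ 2) := by ring
  have hρ2 : 0 ≤ 1 - ρ ^ 2 := by nlinarith
  have : 0 ≤ 2 * ρ * c / 25 * (5 * (1 - ρ ^ 2) + 4 * (ρ * c) ^ 2) := by positivity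
  linarith

theorem cn_abs_sq_bound (α ρ : ℝ) (hα0 : 0 < α) (hα : α < Real.pi / 2)
    (hρ0 : 0 ≤ ρ) (hρ1 : ρ ≤ 1) :
    (‖r (-(ρ : ℂ) * Complex.exp ((α : ℂ) * Complex.I))‖) ^ 2 ≤
      ((1 - (2 * ρ / 5) * Real.cos α) / (1 + (2 * ρ / 5) * Real.cos α)) ^ 2 ∧
    (1 + ρ ^ 2 / 4 - ρ * Real.cos α) / (1 + ρ ^ 2 / 4 + ρ * Real.cos α) ≤
      ((1 - (2 * ρ / 5) * Real.cos α) / (1 + (2 * ρ / 5) * Real.cos α)) ^ 2 := by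
  have hcos : 0 ≤ Real.cos α :=
    Real.cos_nonneg_of_neg_pi_div_two_le_of_le (by linarith [Real.pi_pos]) hα.le
  have key := div_le_sq_div_of_le_one hρ0 hρ1 hcos
  exact ⟨norm_r_neg_mul_exp_mul_I_sq ρ α ▸ key, key⟩
end

section
/- For every α ∈ (0, π/2) and every ρ with 0 ≤ ρ ≤ 1, one has |r(-ρ e^{iα})| ≤ exp(-(4ρ/5) cos α), where r(z) = (1+z/2)/(1-z/2). -/
/-!
Writing `c = cos α` and `a = 1 + ρ²/4`, one has `|r(-ρ e^{iα})|² = (a - ρc)/(a + ρc)`.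
With `u = ρc/a` this is `(1 - u)/(1 + u) = exp(-2 artanh u) ≤ exp(-2u)`, and `a ≤ 5/4` gives
`2u ≥ 8ρc/5`.
-/

open Complex

theorem two_mul_le_log_one_add_sub_log_one_sub {u : ℝ} (hu0 : 0 ≤ u) (hu1 : u < 1) :
    2 * u ≤ Real.log (1 + u) - Real.log (1 - u) := by
  have hsum := Real.hasSum_log_sub_log_of_abs_lt_one (abs_lt.2 ⟨by linarith, hu1⟩)
  simpa using le_hasSum hsum 0 fun k _ => by positivity

theorem one_sub_div_one_add_le_exp_neg_two_mul {u : ℝ} (hu : 0 ≤ u) :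
    (1 - u) / (1 + u) ≤ Real.exp (-(2 * u)) := by
  rcases lt_or_ge u 1 with hu1 | hu1
  · have hpos : 0 < 1 - u := by linarith
    rw [div_le_iff₀ (by linarith), ← Real.exp_log hpos, ← Real.exp_log (by linarith : 0 < 1 + u),
      ← Real.exp_add, Real.exp_le_exp]
    linarith [two_mul_le_log_one_add_sub_log_one_sub hu hu1]
  · exact (div_nonpos_of_nonpos_of_nonneg (by linarith) (by linarith)).trans (Real.exp_pos _).le

theorem sub_div_add_le_exp_neg_two_mul_div {a x : ℝ} (ha : 0 < a) (hx : 0 ≤ x) :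
    (a - x) / (a + x) ≤ Real.exp (-(2 * x / a)) := by
  have h := one_sub_div_one_add_le_exp_neg_two_mul (div_nonneg hx ha.le)
  rwa [← mul_div_assoc, one_sub_div ha.ne', one_add_div ha.ne',
    div_div_div_cancel_right₀ ha.ne'] at h

theorem normSq_one_add_ofReal_mul_exp_mul_I (t α : ℝ) :
    normSq (1 + t * exp (α * I)) = 1 + 2 * t * Real.cos α + t ^ 2 := by
  rw [exp_mul_I, ← ofReal_cos, ← ofReal_sin, normSq_apply]
  simp only [add_re, add_im, mul_re, mul_im, one_re, one_im, ofReal_re, ofReal_im, I_re, I_im]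
  linear_combination t ^ 2 * Real.sin_sq_add_cos_sq α

theorem norm_r_ofReal_mul_exp_mul_I_sq (t α : ℝ) :
    ‖r (t * exp (α * I))‖ ^ 2 =
      (1 + t ^ 2 / 4 + t * Real.cos α) / (1 + t ^ 2 / 4 - t * Real.cos α) := by
  have hnum : 1 + (t : ℂ) * exp (α * I) / 2 = 1 + ((t / 2 : ℝ) : ℂ) * exp (α * I) := by
    push_cast; ring
  have hden : 1 - (t : ℂ) * exp (α * I) / 2 = 1 + ((-t / 2 : ℝ) : ℂ) * exp (α * I) := by
    push_cast; ring
  rw [r, norm_div, div_pow, ← normSq_eq_norm_sq, ← normSq_eq_norm_sq, hnum, hden,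
    normSq_one_add_ofReal_mul_exp_mul_I, normSq_one_add_ofReal_mul_exp_mul_I]
  ring_nf

theorem cn_abs_bound_small_rho (α ρ : ℝ) (hα0 : 0 < α) (hα : α < Real.pi / 2)
    (hρ0 : 0 ≤ ρ) (hρ1 : ρ ≤ 1) :
    ‖r (-(ρ : ℂ) * Complex.exp ((α : ℂ) * Complex.I))‖ ≤
      Real.exp (-(4 * ρ / 5) * Real.cos α) := by
  have hc : 0 ≤ Real.cos α := Real.cos_nonneg_of_neg_pi_div_two_le_of_le (by linarith) hα.le
  have ha : 0 < 1 + ρ ^ 2 / 4 := by positivity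
  refine le_of_pow_le_pow_left₀ two_ne_zero (Real.exp_pos _).le ?_
  rw [← ofReal_neg, norm_r_ofReal_mul_exp_mul_I_sq]
  calc (1 + (-ρ) ^ 2 / 4 + -ρ * Real.cos α) / (1 + (-ρ) ^ 2 / 4 - -ρ * Real.cos α)
      = (1 + ρ ^ 2 / 4 - ρ * Real.cos α) / (1 + ρ ^ 2 / 4 + ρ * Real.cos α) := by ring_nf
    _ ≤ Real.exp (-(2 * (ρ * Real.cos α) / (1 + ρ ^ 2 / 4))) :=
      sub_div_add_le_exp_neg_two_mul_div ha (mul_nonneg hρ0 hc)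
    _ ≤ Real.exp (-(4 * ρ / 5) * Real.cos α) ^ 2 := by
      rw [← Real.exp_nat_mul, Real.exp_le_exp, neg_le, le_div_iff₀ ha]
      nlinarith [mul_nonneg (mul_nonneg hρ0 hc) (sub_nonneg.2 hρ1)]
end

section
/- For every α ∈ (0, π/2) and every ρ ≥ 1, one has |r(-ρ e^{iα})| ≤ exp(-(4/(5ρ)) cos α), where r(z) = (1+z/2)/(1-z/2). -/
open Real

theorem Real.one_sub_div_one_add_le_exp {t : ℝ} (ht : 0 ≤ t) :
    (1 - t) / (1 + t) ≤ exp (-(2 * t)) := by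
  rcases lt_or_ge t 1 with ht1 | ht1
  · have hseries := hasSum_log_sub_log_of_abs_lt_one (abs_lt.mpr ⟨by linarith, ht1⟩)
    have hlog : 2 * t ≤ log (1 + t) - log (1 - t) := by
      simpa using le_hasSum hseries 0 fun k _ => by positivity
    calc (1 - t) / (1 + t) = exp (log (1 - t) - log (1 + t)) := by
          rw [exp_sub, exp_log (by linarith), exp_log (by linarith)]
      _ ≤ exp (-(2 * t)) := exp_le_exp.mpr (by linarith)
  · exact (div_nonpos_of_nonpos_of_nonneg (by linarith) (by linarith)).trans (exp_pos _).le

theorem Complex.sq_norm_one_add_ofReal_mul_exp_mul_I (s θ : ℝ) :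
    ‖1 + (s : ℂ) * Complex.exp (θ * Complex.I)‖ ^ 2 = 1 + 2 * s * Real.cos θ + s ^ 2 := by
  rw [Complex.exp_mul_I, ← Complex.ofReal_cos, ← Complex.ofReal_sin, Complex.sq_norm,
    show (1 : ℂ) + s * (Real.cos θ + Real.sin θ * Complex.I) =
      ↑(1 + s * Real.cos θ) + ↑(s * Real.sin θ) * Complex.I by push_cast; ring,
    Complex.normSq_add_mul_I]
  nlinarith [Real.sin_sq_add_cos_sq θ]

theorem sq_norm_r_neg_mul_exp_mul_I (ρ α : ℝ) :
    ‖r (-(ρ : ℂ) * Complex.exp (α * Complex.I))‖ ^ 2 =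
      (1 - ρ * cos α / (1 + ρ ^ 2 / 4)) / (1 + ρ * cos α / (1 + ρ ^ 2 / 4)) := by
  have hnum := Complex.sq_norm_one_add_ofReal_mul_exp_mul_I (-(ρ / 2)) α
  have hden := Complex.sq_norm_one_add_ofReal_mul_exp_mul_I (ρ / 2) α
  have hA : 1 + ρ ^ 2 / 4 ≠ 0 := by positivity
  rw [r, norm_div, div_pow, show 1 + -(ρ : ℂ) * Complex.exp (α * Complex.I) / 2 =
      1 + ((-(ρ / 2) : ℝ) : ℂ) * Complex.exp (α * Complex.I) by push_cast; ring, hnum,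
    show 1 - -(ρ : ℂ) * Complex.exp (α * Complex.I) / 2 =
      1 + ((ρ / 2 : ℝ) : ℂ) * Complex.exp (α * Complex.I) by push_cast; ring, hden]
  field_simp
  ring

theorem div_mul_le_mul_div_one_add_sq_div_four {ρ c : ℝ} (hρ : 1 ≤ ρ) (hc : 0 ≤ c) :
    4 / (5 * ρ) * c ≤ ρ * c / (1 + ρ ^ 2 / 4) := by
  rw [div_mul_eq_mul_div, div_le_div_iff₀ (by positivity) (by positivity)]
  nlinarith [mul_nonneg hc (by nlinarith : (0 : ℝ) ≤ ρ ^ 2 - 1)]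

theorem cn_abs_bound_large_rho (α ρ : ℝ) (hα0 : 0 < α) (hα : α < Real.pi / 2)
    (hρ : 1 ≤ ρ) :
    ‖r (-(ρ : ℂ) * Complex.exp ((α : ℂ) * Complex.I))‖ ≤
      Real.exp (-(4 / (5 * ρ)) * Real.cos α) := by
  have hcos : 0 ≤ cos α := cos_nonneg_of_mem_Icc ⟨by linarith, hα.le⟩
  have ht : 0 ≤ ρ * cos α / (1 + ρ ^ 2 / 4) := by positivity
  have hsq : ‖r (-(ρ : ℂ) * Complex.exp (α * Complex.I))‖ ^ 2 ≤
      exp (-(4 / (5 * ρ)) * cos α) ^ 2 := by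
    rw [sq_norm_r_neg_mul_exp_mul_I, ← exp_nat_mul]
    refine (one_sub_div_one_add_le_exp ht).trans (exp_le_exp.mpr ?_)
    have := div_mul_le_mul_div_one_add_sq_div_four hρ hcos
    push_cast
    linarith
  exact (pow_le_pow_iff_left₀ (norm_nonneg _) (exp_pos _).le two_ne_zero).mp hsq
end

section
/- For every complex z with Re(z) ≤ 0 and |z| ≤ 1, one has |r₀(z/2) - exp(z/2)| ≤ (3/8)|z|², where r₀(w) = 1/(1-w) is the stability function of the implicit Euler method. -/
/-!
With `w = z / 2`, split `r₀ w - exp w = w² / (1 - w) - (exp w - 1 - w)`. On the closed left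
half-plane `‖1 - w‖ ≥ 1`, so the first term has norm at most `‖w‖²`. There also `‖exp‖ ≤ 1`,
so the mean value inequality along `t ↦ t w` gives first `‖exp w - 1‖ ≤ ‖w‖` and then
`‖exp w - 1 - w‖ ≤ ‖w‖² / 2`. Hence the error is at most `(3/2) ‖w‖² = (3/8) ‖z‖²`.
-/

noncomputable def r₀ (w : ℂ) : ℂ := 1 / (1 - w)

open Complex Set

namespace Complex

variable {w : ℂ}

theorem norm_exp_sub_one_le_of_re_nonpos (hw : w.re ≤ 0) : ‖exp w - 1‖ ≤ ‖w‖ := by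
  have hderiv : ∀ t ∈ Icc (0 : ℝ) 1,
      HasDerivWithinAt (fun t : ℝ ↦ exp (t * w)) (w * exp (t * w)) (Icc 0 1) t := by
    intro t _
    simpa [mul_comm] using ((hasDerivAt_id (t : ℂ)).mul_const w).cexp.comp_ofReal.hasDerivWithinAt
  have hbound : ∀ t ∈ Ico (0 : ℝ) 1, ‖w * exp (t * w)‖ ≤ ‖w‖ := by
    rintro t ⟨ht, -⟩
    rw [norm_mul, norm_exp]
    refine mul_le_of_le_one_right (norm_nonneg w) (Real.exp_le_one_iff.2 ?_)
    simpa using mul_nonpos_of_nonneg_of_nonpos ht hw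
  simpa using norm_image_sub_le_of_norm_deriv_le_segment_01' hderiv hbound

theorem norm_exp_sub_one_sub_self_le_of_re_nonpos (hw : w.re ≤ 0) :
    ‖exp w - 1 - w‖ ≤ ‖w‖ ^ 2 / 2 := by
  have hderiv : ∀ t : ℝ, HasDerivAt (fun t : ℝ ↦ exp (t * w) - 1 - t * w)
      (w * (exp (t * w) - 1)) t := by
    intro t
    have hexp := ((hasDerivAt_id (t : ℂ)).mul_const w).cexp.comp_ofReal
    have hlin := ((hasDerivAt_id (t : ℂ)).mul_const w).comp_ofReal
    simp only [id, one_mul] at hexp hlin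
    exact ((hexp.sub_const 1).sub hlin).congr_deriv (by ring)
  have hB : ∀ t : ℝ, HasDerivAt (fun t : ℝ ↦ t ^ 2 * ‖w‖ ^ 2 / 2) (t * ‖w‖ ^ 2) t := by
    intro t
    exact (((hasDerivAt_pow 2 t).mul_const (‖w‖ ^ 2)).div_const 2).congr_deriv (by push_cast; ring)
  have hbound : ∀ t ∈ Ico (0 : ℝ) 1, ‖w * (exp (t * w) - 1)‖ ≤ t * ‖w‖ ^ 2 := by
    rintro t ⟨ht, -⟩
    have hre : (t * w).re ≤ 0 := by simpa using mul_nonpos_of_nonneg_of_nonpos ht hw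
    calc ‖w * (exp (t * w) - 1)‖ ≤ ‖w‖ * ‖(t : ℂ) * w‖ := by
          rw [norm_mul]; gcongr; exact norm_exp_sub_one_le_of_re_nonpos hre
      _ = t * ‖w‖ ^ 2 := by rw [norm_mul, norm_real, Real.norm_of_nonneg ht]; ring
  simpa using image_norm_le_of_norm_deriv_right_le_deriv_boundary
    (fun t _ ↦ (hderiv t).continuousAt.continuousWithinAt)
    (fun t _ ↦ (hderiv t).hasDerivWithinAt) (by simp) hB hbound (right_mem_Icc.2 zero_le_one)

theorem one_le_norm_one_sub_of_re_nonpos (hw : w.re ≤ 0) : 1 ≤ ‖1 - w‖ :=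
  calc (1 : ℝ) ≤ (1 - w).re := by simpa using hw
    _ ≤ ‖1 - w‖ := re_le_norm _

end Complex

theorem norm_r₀_sub_exp_le_of_re_nonpos {w : ℂ} (hw : w.re ≤ 0) :
    ‖r₀ w - exp w‖ ≤ 3 / 2 * ‖w‖ ^ 2 := by
  have hnorm := one_le_norm_one_sub_of_re_nonpos hw
  have hne : 1 - w ≠ 0 := norm_pos_iff.1 (one_pos.trans_le hnorm)
  have hsplit : r₀ w - exp w = w ^ 2 / (1 - w) - (exp w - 1 - w) := by
    rw [r₀]; field_simp; ring
  calc ‖r₀ w - exp w‖ ≤ ‖w ^ 2 / (1 - w)‖ + ‖exp w - 1 - w‖ := hsplit ▸ norm_sub_le _ _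
    _ ≤ ‖w‖ ^ 2 + ‖w‖ ^ 2 / 2 := by
      gcongr
      · rw [norm_div, norm_pow]; exact div_le_self (by positivity) hnorm
      · exact norm_exp_sub_one_sub_self_le_of_re_nonpos hw
    _ = 3 / 2 * ‖w‖ ^ 2 := by ring

theorem implicit_euler_error_bound_general (z : ℂ) (hre : z.re ≤ 0) :
    ‖r₀ (z / 2) - Complex.exp (z / 2)‖ ≤ (3 / 8) * ‖z‖ ^ 2 := by
  have hw : (z / 2).re ≤ 0 := by simpa using div_nonpos_of_nonpos_of_nonneg hre zero_le_two
  calc ‖r₀ (z / 2) - exp (z / 2)‖ ≤ 3 / 2 * ‖z / 2‖ ^ 2 := norm_r₀_sub_exp_le_of_re_nonpos hw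
    _ = 3 / 8 * ‖z‖ ^ 2 := by rw [norm_div, Complex.norm_ofNat]; ring

theorem implicit_euler_error_bound (z : ℂ) (hre : z.re ≤ 0) (habs : ‖z‖ ≤ 1) :
    ‖r₀ (z / 2) - Complex.exp (z / 2)‖ ≤ (3 / 8) * ‖z‖ ^ 2 :=
  implicit_euler_error_bound_general z hre
end
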